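/- Let the transition rates q on X(m) be defined, for i, j ∈ {1,…,n}, by: q(x, x − e^d_i + e^c_i) = μ^d_i · x^d_i; q(x, x − e^c_i + e^u_i) = μ^c_i if x^c_i ≥ 1 and 0 otherwise; q(x, x − e^u_i + e^d_j) = μ^u_i · x^u_i · p_j; and q(x, y) = 0 for every other y ≠ x (here e^d_i, e^c_i, e^u_i denote the unit vectors in the respective coordinate blocks). Then the product-form distribution π_m satisfies the global balance equations of this generator: for every x ∈ X(m), π_m(x) · Σ_{y ≠ x} q(x, y) = Σ_{y ≠ x} π_m(y) · q(y, x). -/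
import Mathlib


open scoped BigOperators

/-- A state of the closed queueing network: numbers of tasks at each client's
downlink (`d`), computation (`c`), and uplink (`u`) servers. -/
structure St (n : ℕ) where
  d : Fin n → ℕ
  c : Fin n → ℕ
  u : Fin n → ℕ
deriving DecidableEq

namespace St

variable {n : ℕ}

/-- Total number of tasks in a state. -/
def total (x : St n) : ℕ := ∑ i, (x.d i + x.c i + x.u i)

/-- Product-form weight of a state. -/
noncomputable def w (p μc μd μu : Fin n → ℝ) (x : St n) : ℝ :=
  ∏ i,
    (p i / μc i) ^ x.c i *
      ((p i / μd i) ^ x.d i / (Nat.factorial (x.d i) : ℝ)) *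
      ((p i / μu i) ^ x.u i / (Nat.factorial (x.u i) : ℝ))

/-- Normalizing constant `Z(k)` (it vanishes for `k < 0`). -/
noncomputable def Z (p μc μd μu : Fin n → ℝ) (k : ℤ) : ℝ :=
  ∑' x : St n, if (total x : ℤ) = k then w p μc μd μu x else 0

/-- Product-form distribution `π_k`. -/
noncomputable def pd (p μc μd μu : Fin n → ℝ) (k : ℤ) (x : St n) : ℝ :=
  w p μc μd μu x / Z p μc μd μu k

/-- Jump `x - e^d_i + e^c_i` (download completion at client `i`). -/
def jumpDC (x : St n) (i : Fin n) : St n :=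
  ⟨Function.update x.d i (x.d i - 1), Function.update x.c i (x.c i + 1), x.u⟩

/-- Jump `x - e^c_i + e^u_i` (computation completion at client `i`). -/
def jumpCU (x : St n) (i : Fin n) : St n :=
  ⟨x.d, Function.update x.c i (x.c i - 1), Function.update x.u i (x.u i + 1)⟩

/-- Jump `x - e^u_i + e^d_j` (upload completion at client `i`, re-routing to `j`). -/
def jumpUD (x : St n) (i j : Fin n) : St n :=
  ⟨Function.update x.d j (x.d j + 1), x.c, Function.update x.u i (x.u i - 1)⟩

/-- Transition rates of the generator:
`q(x, x - e^d_i + e^c_i) = μ^d_i x^d_i`,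
`q(x, x - e^c_i + e^u_i) = μ^c_i · 1{x^c_i ≥ 1}`,
`q(x, x - e^u_i + e^d_j) = μ^u_i x^u_i p_j`, and `q(x,y) = 0` for every other `y ≠ x`. -/
noncomputable def q (p μc μd μu : Fin n → ℝ) (x y : St n) : ℝ :=
  (∑ i, if y = jumpDC x i then μd i * (x.d i : ℝ) else 0) +
  (∑ i, if y = jumpCU x i then (if 1 ≤ x.c i then μc i else 0) else 0) +
  ∑ i, ∑ j, if y = jumpUD x i j then μu i * (x.u i : ℝ) * p j else 0

end St

open St

namespace StAux

variable {n : ℕ}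

/-- Reverse of `jumpDC`: add back to `d`, remove from `c`. -/
def revDC (x : St n) (i : Fin n) : St n :=
  ⟨Function.update x.d i (x.d i + 1), Function.update x.c i (x.c i - 1), x.u⟩

/-- Reverse of `jumpCU`. -/
def revCU (x : St n) (i : Fin n) : St n :=
  ⟨x.d, Function.update x.c i (x.c i + 1), Function.update x.u i (x.u i - 1)⟩

/-- Reverse of `jumpUD`. -/
def revUD (x : St n) (i j : Fin n) : St n :=
  ⟨Function.update x.d j (x.d j - 1), x.c, Function.update x.u i (x.u i + 1)⟩

lemma sum_update (f : Fin n → ℕ) (i : Fin n) (a : ℕ) :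
    ∑ k, Function.update f i a k = a + ∑ k ∈ Finset.univ.erase i, f k := by
  rw [← Finset.add_sum_erase _ _ (Finset.mem_univ i), Function.update_self]
  congr 1
  exact Finset.sum_congr rfl fun k hk => by rw [Function.update_of_ne (Finset.ne_of_mem_erase hk)]

lemma sum_split (f : Fin n → ℕ) (i : Fin n) :
    ∑ k, f k = f i + ∑ k ∈ Finset.univ.erase i, f k :=
  (Finset.add_sum_erase _ _ (Finset.mem_univ i)).symm

lemma total_eq (x : St n) : x.total = (∑ k, x.d k) + (∑ k, x.c k) + (∑ k, x.u k) := by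
  simp [St.total, Finset.sum_add_distrib]

lemma total_jumpDC (x : St n) (i : Fin n) (h : 1 ≤ x.d i) : (jumpDC x i).total = x.total := by
  simp only [total_eq, jumpDC, sum_update]
  rw [sum_split x.d i, sum_split x.c i]
  omega

lemma total_jumpCU (x : St n) (i : Fin n) (h : 1 ≤ x.c i) : (jumpCU x i).total = x.total := by
  simp only [total_eq, jumpCU, sum_update]
  rw [sum_split x.c i, sum_split x.u i]
  omega

lemma total_jumpUD (x : St n) (i j : Fin n) (h : 1 ≤ x.u i) : (jumpUD x i j).total = x.total := by
  simp only [total_eq, jumpUD, sum_update]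
  rw [sum_split x.d j, sum_split x.u i]
  omega

lemma total_revDC (x : St n) (i : Fin n) (h : 1 ≤ x.c i) : (revDC x i).total = x.total := by
  simp only [total_eq, revDC, sum_update]
  rw [sum_split x.d i, sum_split x.c i]
  omega

lemma total_revCU (x : St n) (i : Fin n) (h : 1 ≤ x.u i) : (revCU x i).total = x.total := by
  simp only [total_eq, revCU, sum_update]
  rw [sum_split x.c i, sum_split x.u i]
  omega

lemma total_revUD (x : St n) (i j : Fin n) (h : 1 ≤ x.d j) : (revUD x i j).total = x.total := by
  simp only [total_eq, revUD, sum_update]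
  rw [sum_split x.d j, sum_split x.u i]
  omega

lemma jumpDC_ne (x : St n) (i : Fin n) : jumpDC x i ≠ x := by
  intro h
  have := congrFun (congrArg St.c h) i
  simp [jumpDC] at this

lemma jumpCU_ne (x : St n) (i : Fin n) : jumpCU x i ≠ x := by
  intro h
  have := congrFun (congrArg St.u h) i
  simp [jumpCU] at this

lemma jumpUD_ne (x : St n) (i j : Fin n) : jumpUD x i j ≠ x := by
  intro h
  have := congrFun (congrArg St.d h) j
  simp [jumpUD] at this

lemma revDC_ne (x : St n) (i : Fin n) : revDC x i ≠ x := by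
  intro h
  have := congrFun (congrArg St.d h) i
  simp [revDC] at this

lemma revCU_ne (x : St n) (i : Fin n) : revCU x i ≠ x := by
  intro h
  have := congrFun (congrArg St.c h) i
  simp [revCU] at this

lemma revUD_ne (x : St n) (i j : Fin n) : revUD x i j ≠ x := by
  intro h
  have := congrFun (congrArg St.u h) i
  simp [revUD] at this

lemma pos_of_eq_jumpDC {x y : St n} {i : Fin n} (h : x = jumpDC y i) : 1 ≤ x.c i := by
  subst h; simp [jumpDC]

lemma pos_of_eq_jumpCU {x y : St n} {i : Fin n} (h : x = jumpCU y i) : 1 ≤ x.u i := by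
  subst h; simp [jumpCU]

lemma pos_of_eq_jumpUD {x y : St n} {i j : Fin n} (h : x = jumpUD y i j) : 1 ≤ x.d j := by
  subst h; simp [jumpUD]

lemma eq_revDC {x y : St n} {i : Fin n} (hd : 1 ≤ y.d i) (h : x = jumpDC y i) :
    y = revDC x i := by
  subst h
  obtain ⟨d, c, u⟩ := y
  dsimp only at hd
  simp only [revDC, jumpDC, Function.update_idem, Function.update_self, St.mk.injEq]
  refine ⟨?_, ?_, trivial⟩
  · rw [show d i - 1 + 1 = d i by omega, Function.update_eq_self]
  · rw [show c i + 1 - 1 = c i by omega, Function.update_eq_self]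

lemma eq_revCU {x y : St n} {i : Fin n} (hc : 1 ≤ y.c i) (h : x = jumpCU y i) :
    y = revCU x i := by
  subst h
  obtain ⟨d, c, u⟩ := y
  dsimp only at hc
  simp only [revCU, jumpCU, Function.update_idem, Function.update_self, St.mk.injEq]
  refine ⟨trivial, ?_, ?_⟩
  · rw [show c i - 1 + 1 = c i by omega, Function.update_eq_self]
  · rw [show u i + 1 - 1 = u i by omega, Function.update_eq_self]

lemma eq_revUD {x y : St n} {i j : Fin n} (hu : 1 ≤ y.u i) (h : x = jumpUD y i j) :
    y = revUD x i j := by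
  subst h
  obtain ⟨d, c, u⟩ := y
  dsimp only at hu
  simp only [revUD, jumpUD, Function.update_idem, Function.update_self, St.mk.injEq]
  refine ⟨?_, trivial, ?_⟩
  · rw [show d j + 1 - 1 = d j by omega, Function.update_eq_self]
  · rw [show u i - 1 + 1 = u i by omega, Function.update_eq_self]

lemma jumpDC_revDC (x : St n) (i : Fin n) (hc : 1 ≤ x.c i) : jumpDC (revDC x i) i = x := by
  obtain ⟨d, c, u⟩ := x
  dsimp only at hc
  simp only [jumpDC, revDC, Function.update_idem, Function.update_self, St.mk.injEq]
  refine ⟨?_, ?_, trivial⟩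
  · rw [show d i + 1 - 1 = d i by omega, Function.update_eq_self]
  · rw [show c i - 1 + 1 = c i by omega, Function.update_eq_self]

lemma jumpCU_revCU (x : St n) (i : Fin n) (hu : 1 ≤ x.u i) : jumpCU (revCU x i) i = x := by
  obtain ⟨d, c, u⟩ := x
  dsimp only at hu
  simp only [jumpCU, revCU, Function.update_idem, Function.update_self, St.mk.injEq]
  refine ⟨trivial, ?_, ?_⟩
  · rw [show c i + 1 - 1 = c i by omega, Function.update_eq_self]
  · rw [show u i - 1 + 1 = u i by omega, Function.update_eq_self]

lemma jumpUD_revUD (x : St n) (i j : Fin n) (hd : 1 ≤ x.d j) : jumpUD (revUD x i j) i j = x := by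
  obtain ⟨d, c, u⟩ := x
  dsimp only at hd
  simp only [jumpUD, revUD, Function.update_idem, Function.update_self, St.mk.injEq]
  refine ⟨?_, trivial, ?_⟩
  · rw [show d j - 1 + 1 = d j by omega, Function.update_eq_self]
  · rw [show u i + 1 - 1 = u i by omega, Function.update_eq_self]

end StAux

namespace StAux

variable {n : ℕ}

lemma prod_comp_update (F : Fin n → ℕ → ℝ) (f : Fin n → ℕ) (i : Fin n) (a : ℕ) :
    ∏ k, F k (Function.update f i a k) = F i a * ∏ k ∈ Finset.univ.erase i, F k (f k) := by
  rw [← Finset.mul_prod_erase _ _ (Finset.mem_univ i), Function.update_self]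
  congr 1
  exact Finset.prod_congr rfl fun k hk => by rw [Function.update_of_ne (Finset.ne_of_mem_erase hk)]

lemma prod_split (F : Fin n → ℕ → ℝ) (f : Fin n → ℕ) (i : Fin n) :
    ∏ k, F k (f k) = F i (f i) * ∏ k ∈ Finset.univ.erase i, F k (f k) :=
  (Finset.mul_prod_erase _ _ (Finset.mem_univ i)).symm

lemma w_eq (p μc μd μu : Fin n → ℝ) (x : St n) :
    w p μc μd μu x =
      (∏ k, (p k / μc k) ^ x.c k) *
        (∏ k, (p k / μd k) ^ x.d k / (Nat.factorial (x.d k) : ℝ)) *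
        (∏ k, (p k / μu k) ^ x.u k / (Nat.factorial (x.u k) : ℝ)) := by
  rw [w, Finset.prod_mul_distrib, Finset.prod_mul_distrib]

lemma w_revDC (p μc μd μu : Fin n → ℝ) (hμc : ∀ i, 0 < μc i) (hμd : ∀ i, 0 < μd i)
    (x : St n) (i : Fin n) (hc : 1 ≤ x.c i) :
    w p μc μd μu (revDC x i) * (μd i * ((x.d i : ℝ) + 1)) = w p μc μd μu x * μc i := by
  obtain ⟨c', hc'⟩ := Nat.exists_eq_add_of_le hc
  rw [w_eq, w_eq]
  simp only [revDC]
  rw [prod_comp_update (fun k t => (p k / μc k) ^ t) x.c i,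
      prod_comp_update (fun k t => (p k / μd k) ^ t / (Nat.factorial t : ℝ)) x.d i,
      prod_split (fun k t => (p k / μc k) ^ t) x.c i,
      prod_split (fun k t => (p k / μd k) ^ t / (Nat.factorial t : ℝ)) x.d i]
  have key : ((p i / μc i) ^ (x.c i - 1)) * ((p i / μd i) ^ (x.d i + 1) / (Nat.factorial (x.d i + 1) : ℝ))
      * (μd i * ((x.d i : ℝ) + 1))
      = ((p i / μc i) ^ (x.c i)) * ((p i / μd i) ^ (x.d i) / (Nat.factorial (x.d i) : ℝ)) * μc i := by
    rw [hc']
    simp only [Nat.add_sub_cancel_left, Nat.factorial_succ, pow_succ, pow_add, pow_one]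
    have h1 : (μc i) ≠ 0 := (hμc i).ne'
    have h2 : (μd i) ≠ 0 := (hμd i).ne'
    have h3 : ((Nat.factorial (x.d i)) : ℝ) ≠ 0 := Nat.cast_ne_zero.mpr (Nat.factorial_ne_zero _)
    have h4 : ((x.d i : ℝ) + 1) ≠ 0 := by positivity
    push_cast
    field_simp
  linear_combination ((∏ k ∈ Finset.univ.erase i, (p k / μc k) ^ x.c k) *
    (∏ k ∈ Finset.univ.erase i, (p k / μd k) ^ x.d k / (Nat.factorial (x.d k) : ℝ)) *
    (∏ k, (p k / μu k) ^ x.u k / (Nat.factorial (x.u k) : ℝ))) * key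

lemma w_revCU (p μc μd μu : Fin n → ℝ) (hμc : ∀ i, 0 < μc i) (hμu : ∀ i, 0 < μu i)
    (x : St n) (i : Fin n) (hu : 1 ≤ x.u i) :
    w p μc μd μu (revCU x i) * μc i = w p μc μd μu x * (μu i * (x.u i : ℝ)) := by
  obtain ⟨u', hu'⟩ := Nat.exists_eq_add_of_le hu
  rw [w_eq, w_eq]
  simp only [revCU]
  rw [prod_comp_update (fun k t => (p k / μc k) ^ t) x.c i,
      prod_comp_update (fun k t => (p k / μu k) ^ t / (Nat.factorial t : ℝ)) x.u i,
      prod_split (fun k t => (p k / μc k) ^ t) x.c i,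
      prod_split (fun k t => (p k / μu k) ^ t / (Nat.factorial t : ℝ)) x.u i]
  have key : ((p i / μc i) ^ (x.c i + 1)) * ((p i / μu i) ^ (x.u i - 1) / (Nat.factorial (x.u i - 1) : ℝ))
      * μc i
      = ((p i / μc i) ^ (x.c i)) * ((p i / μu i) ^ (x.u i) / (Nat.factorial (x.u i) : ℝ))
        * (μu i * (x.u i : ℝ)) := by
    rw [hu']
    simp only [Nat.add_sub_cancel_left, pow_succ, pow_add, pow_one]
    rw [show 1 + u' = u' + 1 by omega, Nat.factorial_succ]
    have h1 : (μc i) ≠ 0 := (hμc i).ne'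
    have h2 : (μu i) ≠ 0 := (hμu i).ne'
    have h3 : ((Nat.factorial u') : ℝ) ≠ 0 := Nat.cast_ne_zero.mpr (Nat.factorial_ne_zero _)
    push_cast
    field_simp
  linear_combination ((∏ k ∈ Finset.univ.erase i, (p k / μc k) ^ x.c k) *
    (∏ k, (p k / μd k) ^ x.d k / (Nat.factorial (x.d k) : ℝ)) *
    (∏ k ∈ Finset.univ.erase i, (p k / μu k) ^ x.u k / (Nat.factorial (x.u k) : ℝ))) * key

lemma w_revUD (p μc μd μu : Fin n → ℝ) (hμd : ∀ i, 0 < μd i) (hμu : ∀ i, 0 < μu i)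
    (x : St n) (i j : Fin n) (hd : 1 ≤ x.d j) :
    w p μc μd μu (revUD x i j) * (μu i * ((x.u i : ℝ) + 1) * p j)
      = w p μc μd μu x * (p i * (μd j * (x.d j : ℝ))) := by
  obtain ⟨d', hd'⟩ := Nat.exists_eq_add_of_le hd
  rw [w_eq, w_eq]
  simp only [revUD]
  rw [prod_comp_update (fun k t => (p k / μd k) ^ t / (Nat.factorial t : ℝ)) x.d j,
      prod_comp_update (fun k t => (p k / μu k) ^ t / (Nat.factorial t : ℝ)) x.u i,
      prod_split (fun k t => (p k / μd k) ^ t / (Nat.factorial t : ℝ)) x.d j,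
      prod_split (fun k t => (p k / μu k) ^ t / (Nat.factorial t : ℝ)) x.u i]
  have key : ((p j / μd j) ^ (x.d j - 1) / (Nat.factorial (x.d j - 1) : ℝ))
      * ((p i / μu i) ^ (x.u i + 1) / (Nat.factorial (x.u i + 1) : ℝ))
      * (μu i * ((x.u i : ℝ) + 1) * p j)
      = ((p j / μd j) ^ (x.d j) / (Nat.factorial (x.d j) : ℝ))
        * ((p i / μu i) ^ (x.u i) / (Nat.factorial (x.u i) : ℝ))
        * (p i * (μd j * (x.d j : ℝ))) := by
    rw [hd']
    simp only [Nat.add_sub_cancel_left, Nat.factorial_succ, pow_succ, pow_add, pow_one]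
    rw [show 1 + d' = d' + 1 by omega, Nat.factorial_succ]
    have h1 : (μd j) ≠ 0 := (hμd j).ne'
    have h2 : (μu i) ≠ 0 := (hμu i).ne'
    have h3 : ((Nat.factorial d') : ℝ) ≠ 0 := Nat.cast_ne_zero.mpr (Nat.factorial_ne_zero _)
    have h4 : ((Nat.factorial (x.u i)) : ℝ) ≠ 0 := Nat.cast_ne_zero.mpr (Nat.factorial_ne_zero _)
    have h5 : ((x.u i : ℝ) + 1) ≠ 0 := by positivity
    push_cast
    field_simp
  linear_combination ((∏ k, (p k / μc k) ^ x.c k) *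
    (∏ k ∈ Finset.univ.erase j, (p k / μd k) ^ x.d k / (Nat.factorial (x.d k) : ℝ)) *
    (∏ k ∈ Finset.univ.erase i, (p k / μu k) ^ x.u k / (Nat.factorial (x.u k) : ℝ))) * key

end StAux

namespace StAux

variable {n : ℕ}

def outSet (x : St n) : Finset (St n) :=
  (Finset.univ.image (jumpDC x)) ∪ (Finset.univ.image (jumpCU x)) ∪
    (Finset.univ.image fun ij : Fin n × Fin n => jumpUD x ij.1 ij.2)

def inSet (x : St n) : Finset (St n) :=
  (Finset.univ.image (revDC x)) ∪ (Finset.univ.image (revCU x)) ∪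
    (Finset.univ.image fun ij : Fin n × Fin n => revUD x ij.1 ij.2)

lemma jumpDC_mem_outSet (x : St n) (i : Fin n) : jumpDC x i ∈ outSet x := by
  simp [outSet]

lemma jumpCU_mem_outSet (x : St n) (i : Fin n) : jumpCU x i ∈ outSet x := by
  simp [outSet]

lemma jumpUD_mem_outSet (x : St n) (i j : Fin n) : jumpUD x i j ∈ outSet x := by
  refine Finset.mem_union_right _ (Finset.mem_image.mpr ⟨(i, j), Finset.mem_univ _, rfl⟩)

lemma revDC_mem_inSet (x : St n) (i : Fin n) : revDC x i ∈ inSet x := by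
  simp [inSet]

lemma revCU_mem_inSet (x : St n) (i : Fin n) : revCU x i ∈ inSet x := by
  simp [inSet]

lemma revUD_mem_inSet (x : St n) (i j : Fin n) : revUD x i j ∈ inSet x := by
  refine Finset.mem_union_right _ (Finset.mem_image.mpr ⟨(i, j), Finset.mem_univ _, rfl⟩)

lemma mem_outSet_of_q_ne_zero {p μc μd μu : Fin n → ℝ} {x y : St n}
    (h : q p μc μd μu x y ≠ 0) : y ∈ outSet x := by
  by_contra hy
  apply h
  simp only [outSet, Finset.mem_union, Finset.mem_image, Finset.mem_univ, true_and, not_or,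
    not_exists] at hy
  obtain ⟨⟨h1, h2⟩, h3⟩ := hy
  rw [q, Finset.sum_eq_zero fun i _ => if_neg fun hh => h1 i hh.symm,
    Finset.sum_eq_zero fun i _ => if_neg fun hh => h2 i hh.symm,
    Finset.sum_eq_zero fun i _ =>
      Finset.sum_eq_zero fun j _ => if_neg fun hh => h3 (i, j) hh.symm]
  ring

lemma mem_inSet_of_q_ne_zero {p μc μd μu : Fin n → ℝ} {x y : St n}
    (h : q p μc μd μu y x ≠ 0) : y ∈ inSet x := by
  rw [q] at h
  have h' : (∑ i, if x = jumpDC y i then μd i * (y.d i : ℝ) else 0) ≠ 0 ∨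
      (∑ i, if x = jumpCU y i then (if 1 ≤ y.c i then μc i else 0) else 0) ≠ 0 ∨
      (∑ i, ∑ j, if x = jumpUD y i j then μu i * (y.u i : ℝ) * p j else 0) ≠ 0 := by
    by_contra hc
    push_neg at hc
    rw [hc.1, hc.2.1, hc.2.2] at h
    simp at h
  rcases h' with h' | h' | h'
  · obtain ⟨i, _, hi⟩ := Finset.exists_ne_zero_of_sum_ne_zero h'
    by_cases hxy : x = jumpDC y i
    · have hd : 1 ≤ y.d i := by
        by_contra hd
        rw [if_pos hxy, show y.d i = 0 by omega] at hi
        simp at hi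
      rw [eq_revDC hd hxy]
      exact revDC_mem_inSet x i
    · rw [if_neg hxy] at hi; exact absurd rfl hi
  · obtain ⟨i, _, hi⟩ := Finset.exists_ne_zero_of_sum_ne_zero h'
    by_cases hxy : x = jumpCU y i
    · have hcc : 1 ≤ y.c i := by
        by_contra hcc
        rw [if_pos hxy, if_neg hcc] at hi
        exact absurd rfl hi
      rw [eq_revCU hcc hxy]
      exact revCU_mem_inSet x i
    · rw [if_neg hxy] at hi; exact absurd rfl hi
  · obtain ⟨i, _, hi⟩ := Finset.exists_ne_zero_of_sum_ne_zero h'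
    obtain ⟨j, _, hj⟩ := Finset.exists_ne_zero_of_sum_ne_zero hi
    by_cases hxy : x = jumpUD y i j
    · have hu : 1 ≤ y.u i := by
        by_contra hu
        rw [if_pos hxy, show y.u i = 0 by omega] at hj
        simp at hj
      rw [eq_revUD hu hxy]
      exact revUD_mem_inSet x i j
    · rw [if_neg hxy] at hj; exact absurd rfl hj

lemma sum_single_of (T : Finset (St n)) (f : St n → ℝ) (y₀ : St n) (hy₀ : y₀ ∈ T)
    (h : ∀ y, f y ≠ 0 → y = y₀) : ∑ y ∈ T, f y = f y₀ := by
  apply Finset.sum_eq_single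
  · intro y _ hy
    by_contra hf
    exact hy (h y hf)
  · intro h'
    exact absurd hy₀ h'

end StAux

open StAux

/-- The product-form distribution `π_m` satisfies the global balance equations of the
generator `q` on the state space `X(m)`. -/
theorem stmt0 (n m : ℕ) (hn : 1 ≤ n) (hm : 1 ≤ m)
    (p μc μd μu : Fin n → ℝ)
    (hp : ∀ i, 0 < p i) (hpsum : ∑ i, p i = 1)
    (hμc : ∀ i, 0 < μc i) (hμd : ∀ i, 0 < μd i) (hμu : ∀ i, 0 < μu i)
    (x : St n) (hx : x.total = m) :
    pd p μc μd μu (m : ℤ) x *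
        (∑' y : St n, if y.total = m ∧ y ≠ x then q p μc μd μu x y else 0) =
      ∑' y : St n,
        if y.total = m ∧ y ≠ x then pd p μc μd μu (m : ℤ) y * q p μc μd μu y x else 0 := by
  classical
  -- LHS: reduce the tsum to a finite sum over `outSet x`
  have hLt : (∑' y : St n, if y.total = m ∧ y ≠ x then q p μc μd μu x y else 0)
      = ∑ y ∈ outSet x, if y.total = m ∧ y ≠ x then q p μc μd μu x y else 0 := by
    apply tsum_eq_sum
    intro y hy
    have hq : q p μc μd μu x y = 0 := by
      by_contra hq
      exact hy (mem_outSet_of_q_ne_zero hq)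
    simp [hq]
  -- RHS: reduce the tsum to a finite sum over `inSet x`
  have hRt : (∑' y : St n,
        if y.total = m ∧ y ≠ x then pd p μc μd μu (m : ℤ) y * q p μc μd μu y x else 0)
      = ∑ y ∈ inSet x,
          if y.total = m ∧ y ≠ x then pd p μc μd μu (m : ℤ) y * q p μc μd μu y x else 0 := by
    apply tsum_eq_sum
    intro y hy
    have hq : q p μc μd μu y x = 0 := by
      by_contra hq
      exact hy (mem_inSet_of_q_ne_zero hq)
    simp [hq]
  rw [hLt, hRt]
  -- expand the LHS finite sum
  have keyL : ∀ y : St n, (if y.total = m ∧ y ≠ x then q p μc μd μu x y else 0)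
      = (∑ i, if y.total = m ∧ y ≠ x then
            (if y = jumpDC x i then μd i * (x.d i : ℝ) else 0) else 0)
        + (∑ i, if y.total = m ∧ y ≠ x then
            (if y = jumpCU x i then (if 1 ≤ x.c i then μc i else 0) else 0) else 0)
        + (∑ i, ∑ j, if y.total = m ∧ y ≠ x then
            (if y = jumpUD x i j then μu i * (x.u i : ℝ) * p j else 0) else 0) := by
    intro y
    by_cases h : y.total = m ∧ y ≠ x
    · simp only [if_pos h]; rfl
    · simp only [if_neg h, Finset.sum_const_zero, add_zero]
  have keyR : ∀ y : St n,
      (if y.total = m ∧ y ≠ x then pd p μc μd μu (m : ℤ) y * q p μc μd μu y x else 0)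
      = (∑ i, if y.total = m ∧ y ≠ x then pd p μc μd μu (m : ℤ) y *
            (if x = jumpDC y i then μd i * (y.d i : ℝ) else 0) else 0)
        + (∑ i, if y.total = m ∧ y ≠ x then pd p μc μd μu (m : ℤ) y *
            (if x = jumpCU y i then (if 1 ≤ y.c i then μc i else 0) else 0) else 0)
        + (∑ i, ∑ j, if y.total = m ∧ y ≠ x then pd p μc μd μu (m : ℤ) y *
            (if x = jumpUD y i j then μu i * (y.u i : ℝ) * p j else 0) else 0) := by
    intro y
    by_cases h : y.total = m ∧ y ≠ x
    · simp only [if_pos h, q, mul_add, Finset.mul_sum]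
    · simp only [if_neg h, Finset.sum_const_zero, add_zero]
  simp only [keyL, keyR]
  rw [Finset.sum_add_distrib, Finset.sum_add_distrib, Finset.sum_add_distrib,
    Finset.sum_add_distrib]
  -- evaluate the six double sums
  have hA : (∑ y ∈ outSet x, ∑ i, if y.total = m ∧ y ≠ x then
        (if y = jumpDC x i then μd i * (x.d i : ℝ) else 0) else 0)
      = ∑ i, μd i * (x.d i : ℝ) := by
    rw [Finset.sum_comm]
    refine Finset.sum_congr rfl fun i _ => ?_
    rw [sum_single_of (outSet x) _ (jumpDC x i) (jumpDC_mem_outSet x i)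
      (fun y hy => by by_contra hne; simp [hne] at hy)]
    rw [if_pos (rfl : jumpDC x i = jumpDC x i)]
    by_cases hd : 1 ≤ x.d i
    · rw [if_pos ⟨by rw [total_jumpDC x i hd, hx], jumpDC_ne x i⟩]
    · have hd0 : x.d i = 0 := by omega
      simp [hd0]
  have hB : (∑ y ∈ outSet x, ∑ i, if y.total = m ∧ y ≠ x then
        (if y = jumpCU x i then (if 1 ≤ x.c i then μc i else 0) else 0) else 0)
      = ∑ i, if 1 ≤ x.c i then μc i else 0 := by
    rw [Finset.sum_comm]
    refine Finset.sum_congr rfl fun i _ => ?_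
    rw [sum_single_of (outSet x) _ (jumpCU x i) (jumpCU_mem_outSet x i)
      (fun y hy => by by_contra hne; simp [hne] at hy)]
    rw [if_pos (rfl : jumpCU x i = jumpCU x i)]
    by_cases hc : 1 ≤ x.c i
    · rw [if_pos ⟨by rw [total_jumpCU x i hc, hx], jumpCU_ne x i⟩]
    · simp [hc]
  have hC : (∑ y ∈ outSet x, ∑ i, ∑ j, if y.total = m ∧ y ≠ x then
        (if y = jumpUD x i j then μu i * (x.u i : ℝ) * p j else 0) else 0)
      = ∑ i, μu i * (x.u i : ℝ) := by
    rw [Finset.sum_comm]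
    refine Finset.sum_congr rfl fun i _ => ?_
    rw [Finset.sum_comm]
    have hstep0 : ∀ j : Fin n, (∑ y ∈ outSet x, if y.total = m ∧ y ≠ x then
        (if y = jumpUD x i j then μu i * (x.u i : ℝ) * p j else 0) else 0)
        = μu i * (x.u i : ℝ) * p j := by
      intro j
      rw [sum_single_of (outSet x) _ (jumpUD x i j) (jumpUD_mem_outSet x i j)
        (fun y hy => by by_contra hne; simp [hne] at hy)]
      rw [if_pos (rfl : jumpUD x i j = jumpUD x i j)]
      by_cases hu : 1 ≤ x.u i
      · rw [if_pos ⟨by rw [total_jumpUD x i j hu, hx], jumpUD_ne x i j⟩]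
      · have hu0 : x.u i = 0 := by omega
        simp [hu0]
    rw [Finset.sum_congr rfl fun j _ => hstep0 j, ← Finset.mul_sum, hpsum, mul_one]
  have hA' : (∑ y ∈ inSet x, ∑ i, if y.total = m ∧ y ≠ x then pd p μc μd μu (m : ℤ) y *
        (if x = jumpDC y i then μd i * (y.d i : ℝ) else 0) else 0)
      = ∑ i, pd p μc μd μu (m : ℤ) x * (if 1 ≤ x.c i then μc i else 0) := by
    rw [Finset.sum_comm]
    refine Finset.sum_congr rfl fun i _ => ?_
    rw [sum_single_of (inSet x) _ (revDC x i) (revDC_mem_inSet x i) ?_]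
    · by_cases hc : 1 ≤ x.c i
      · have hx1 : x = jumpDC (revDC x i) i := (jumpDC_revDC x i hc).symm
        rw [if_pos ⟨by rw [total_revDC x i hc, hx], revDC_ne x i⟩, if_pos hx1, if_pos hc]
        have hdi : ((revDC x i).d i : ℝ) = (x.d i : ℝ) + 1 := by simp [revDC]
        rw [hdi]
        show w p μc μd μu (revDC x i) / Z p μc μd μu (m : ℤ) * (μd i * ((x.d i : ℝ) + 1))
          = w p μc μd μu x / Z p μc μd μu (m : ℤ) * μc i
        rw [div_mul_eq_mul_div, div_mul_eq_mul_div, w_revDC p μc μd μu hμc hμd x i hc]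
      · have hx1 : ¬ x = jumpDC (revDC x i) i := fun h => hc (pos_of_eq_jumpDC h)
        rw [if_neg hx1, if_neg hc]
        simp
    · intro y hy
      by_cases hxy : x = jumpDC y i
      · by_cases hd : 1 ≤ y.d i
        · exact eq_revDC hd hxy
        · have : y.d i = 0 := by omega
          simp [hxy, this] at hy
      · simp [hxy] at hy
  have hB' : (∑ y ∈ inSet x, ∑ i, if y.total = m ∧ y ≠ x then pd p μc μd μu (m : ℤ) y *
        (if x = jumpCU y i then (if 1 ≤ y.c i then μc i else 0) else 0) else 0)
      = ∑ i, pd p μc μd μu (m : ℤ) x * (μu i * (x.u i : ℝ)) := by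
    rw [Finset.sum_comm]
    refine Finset.sum_congr rfl fun i _ => ?_
    rw [sum_single_of (inSet x) _ (revCU x i) (revCU_mem_inSet x i) ?_]
    · by_cases hu : 1 ≤ x.u i
      · have hx1 : x = jumpCU (revCU x i) i := (jumpCU_revCU x i hu).symm
        have hci : 1 ≤ (revCU x i).c i := by simp [revCU]
        rw [if_pos ⟨by rw [total_revCU x i hu, hx], revCU_ne x i⟩, if_pos hx1, if_pos hci]
        show w p μc μd μu (revCU x i) / Z p μc μd μu (m : ℤ) * μc i
          = w p μc μd μu x / Z p μc μd μu (m : ℤ) * (μu i * (x.u i : ℝ))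
        rw [div_mul_eq_mul_div, div_mul_eq_mul_div, w_revCU p μc μd μu hμc hμu x i hu]
      · have hx1 : ¬ x = jumpCU (revCU x i) i := fun h => hu (pos_of_eq_jumpCU h)
        have hu0 : x.u i = 0 := by omega
        rw [if_neg hx1]
        simp [hu0]
    · intro y hy
      by_cases hxy : x = jumpCU y i
      · by_cases hc : 1 ≤ y.c i
        · exact eq_revCU hc hxy
        · simp [hxy, hc] at hy
      · simp [hxy] at hy
  have hC' : (∑ y ∈ inSet x, ∑ i, ∑ j, if y.total = m ∧ y ≠ x then pd p μc μd μu (m : ℤ) y *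
        (if x = jumpUD y i j then μu i * (y.u i : ℝ) * p j else 0) else 0)
      = pd p μc μd μu (m : ℤ) x * ∑ j, μd j * (x.d j : ℝ) := by
    rw [Finset.sum_comm]
    have hstep : ∀ i : Fin n, (∑ j, ∑ y ∈ inSet x,
        if y.total = m ∧ y ≠ x then pd p μc μd μu (m : ℤ) y *
          (if x = jumpUD y i j then μu i * (y.u i : ℝ) * p j else 0) else 0)
        = ∑ j, pd p μc μd μu (m : ℤ) x * (p i * (μd j * (x.d j : ℝ))) := by
      intro i
      refine Finset.sum_congr rfl fun j _ => ?_
      rw [sum_single_of (inSet x) _ (revUD x i j) (revUD_mem_inSet x i j) ?_]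
      · by_cases hd : 1 ≤ x.d j
        · have hx1 : x = jumpUD (revUD x i j) i j := (jumpUD_revUD x i j hd).symm
          rw [if_pos ⟨by rw [total_revUD x i j hd, hx], revUD_ne x i j⟩, if_pos hx1]
          have hui : ((revUD x i j).u i : ℝ) = (x.u i : ℝ) + 1 := by simp [revUD]
          rw [hui]
          show w p μc μd μu (revUD x i j) / Z p μc μd μu (m : ℤ) *
              (μu i * ((x.u i : ℝ) + 1) * p j)
            = w p μc μd μu x / Z p μc μd μu (m : ℤ) * (p i * (μd j * (x.d j : ℝ)))
          rw [div_mul_eq_mul_div, div_mul_eq_mul_div, w_revUD p μc μd μu hμd hμu x i j hd]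
        · have hx1 : ¬ x = jumpUD (revUD x i j) i j := fun h => hd (pos_of_eq_jumpUD h)
          have hd0 : x.d j = 0 := by omega
          rw [if_neg hx1]
          simp [hd0]
      · intro y hy
        by_cases hxy : x = jumpUD y i j
        · by_cases hu : 1 ≤ y.u i
          · exact eq_revUD hu hxy
          · have : y.u i = 0 := by omega
            simp [hxy, this] at hy
        · simp [hxy] at hy
    calc (∑ i : Fin n, ∑ y ∈ inSet x, ∑ j, if y.total = m ∧ y ≠ x then
            pd p μc μd μu (m : ℤ) y *
              (if x = jumpUD y i j then μu i * (y.u i : ℝ) * p j else 0) else 0)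
        = ∑ i : Fin n, ∑ j, pd p μc μd μu (m : ℤ) x * (p i * (μd j * (x.d j : ℝ))) := by
          refine Finset.sum_congr rfl fun i _ => ?_
          rw [Finset.sum_comm]
          exact hstep i
      _ = ∑ i : Fin n, p i * (pd p μc μd μu (m : ℤ) x * ∑ j, μd j * (x.d j : ℝ)) := by
          refine Finset.sum_congr rfl fun i _ => ?_
          rw [Finset.mul_sum, Finset.mul_sum]
          exact Finset.sum_congr rfl fun j _ => by ring
      _ = pd p μc μd μu (m : ℤ) x * ∑ j, μd j * (x.d j : ℝ) := by
          rw [← Finset.sum_mul, hpsum, one_mul]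
  rw [hA, hB, hC, hA', hB', hC']
  rw [← Finset.mul_sum, ← Finset.mul_sum, ← mul_add]
  rw [mul_add, mul_add]
  ring
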